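/- arXiv:2001.08545 — 2 statements merged into one kernel-verified Lean document; each statement's English description precedes it below -/
import Mathlib

section
/- Define \delta(n) = 1 if n is odd and 0 if n is even. Let \Psi(a,b,n) be defined by \Psi(a,b,0)=2, \Psi(a,b,1)=1, and \Psi(a,b,n+1) = (2a-b)^{\delta(n)} \Psi(a,b,n) - a \Psi(a,b,n-1). Then for all a, b and all n \ge 1, \Psi(a,b,n) = \sum_{i=0}^{\lfloor n/2 \rfloor} (n/(n-i)) \binom{n-i}{i} (-a)^i (2a-b)^{\lfloor n/2 \rfloor - i}. -/
open Finset Polynomial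

/-- parity indicator: 1 if odd, 0 if even -/
def pdelta (n : ℕ) : ℕ := n % 2

/-- Ψ(a,b,0)=2, Ψ(a,b,1)=1, Ψ(a,b,n+1)=(2a-b)^{δ(n)}Ψ(a,b,n) - aΨ(a,b,n-1) -/
def Psi {R : Type*} [CommRing R] (a b : R) : ℕ → R
  | 0 => 2
  | 1 => 1
  | (n+2) => (2*a-b)^(pdelta (n+1)) * Psi a b (n+1) - a * Psi a b n

/-- Φ(a,b,0)=0, Φ(a,b,1)=1, Φ(a,b,n+1)=(2a-b)^{δ(n+1)}Φ(a,b,n) - aΦ(a,b,n-1) -/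
def Phi {R : Type*} [CommRing R] (a b : R) : ℕ → R
  | 0 => 0
  | 1 => 1
  | (n+2) => (2*a-b)^(pdelta (n+2)) * Phi a b (n+1) - a * Phi a b n

section Aux

variable {R : Type*} [CommRing R]

/-- Fibonacci-polynomial-like sum with generic top index. -/
private def Bsum (a c : R) (k n : ℕ) : R :=
  ∑ i ∈ Finset.range (k + 1), ((n - i).choose i : R) * (-a) ^ i * c ^ (k - i)

private lemma pascal_aux (n i : ℕ) :
    (n + 1 - i).choose (i + 1) = (n - i).choose (i + 1) + (n - i).choose i := by
  rcases le_or_gt i n with h | h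
  · rw [show n + 1 - i = (n - i) + 1 by omega, Nat.choose_succ_succ' (n - i) i, add_comm]
  · rw [show n + 1 - i = 0 by omega, show n - i = 0 by omega,
      Nat.choose_eq_zero_of_lt (show 0 < i + 1 by omega),
      Nat.choose_eq_zero_of_lt (show 0 < i by omega)]

private lemma Bsum_key (a c : R) (k n : ℕ) :
    Bsum a c (k+1) (n+2) = Bsum a c (k+1) (n+1) - a * Bsum a c k n := by
  unfold Bsum
  rw [Finset.sum_range_succ' (fun i => ((n + 2 - i).choose i : R) * (-a) ^ i * c ^ (k + 1 - i)) (k+1),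
      Finset.sum_range_succ' (fun i => ((n + 1 - i).choose i : R) * (-a) ^ i * c ^ (k + 1 - i)) (k+1),
      Finset.mul_sum]
  have hconst : ((n + 2 - 0).choose 0 : R) * (-a) ^ 0 * c ^ (k + 1 - 0)
      = ((n + 1 - 0).choose 0 : R) * (-a) ^ 0 * c ^ (k + 1 - 0) := by simp
  have hsum : (∑ i ∈ Finset.range (k+1),
        ((n + 2 - (i+1)).choose (i+1) : R) * (-a) ^ (i+1) * c ^ (k + 1 - (i+1)))
      = ∑ i ∈ Finset.range (k+1),
        (((n + 1 - (i+1)).choose (i+1) : R) * (-a) ^ (i+1) * c ^ (k + 1 - (i+1))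
          - a * (((n - i).choose i : R) * (-a) ^ i * c ^ (k - i))) := by
    refine Finset.sum_congr rfl fun i hi => ?_
    rw [show n + 2 - (i+1) = n + 1 - i by omega, show n + 1 - (i+1) = n - i by omega,
      show k + 1 - (i+1) = k - i by omega, pascal_aux n i]
    push_cast
    ring
  rw [hconst, hsum, Finset.sum_sub_distrib]
  ring

private lemma Bsum_top (a c : R) (k n : ℕ) (h : n < 2 * k + 2) :
    Bsum a c (k+1) n = c * Bsum a c k n := by
  unfold Bsum
  rw [Finset.sum_range_succ, Finset.mul_sum,
    Nat.choose_eq_zero_of_lt (show n - (k+1) < k+1 by omega)]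
  simp only [Nat.cast_zero, zero_mul, add_zero]
  refine Finset.sum_congr rfl fun i hi => ?_
  have hik : i < k + 1 := Finset.mem_range.1 hi
  rw [show k + 1 - i = (k - i) + 1 by omega, pow_succ]
  ring

/-- `Afib a c n` : the Fibonacci-like sequence. -/
private def Afib (a c : R) (n : ℕ) : R := Bsum a c (n / 2) n

private lemma Afib_rec (a c : R) (n : ℕ) :
    Afib a c (n+2) = c ^ ((n+1) % 2) * Afib a c (n+1) - a * Afib a c n := by
  obtain ⟨m, rfl | rfl⟩ := Nat.even_or_odd' n
  · have e2 : (2*m+2)/2 = m+1 := by omega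
    have e1 : (2*m+1)/2 = m := by omega
    have e0 : (2*m)/2 = m := by omega
    have ep : (2*m+1) % 2 = 1 := by omega
    unfold Afib
    rw [e2, e1, e0, ep, pow_one, Bsum_key a c m (2*m), Bsum_top a c m (2*m+1) (by omega)]
  · have e2 : (2*m+1+2)/2 = m+1 := by omega
    have e1 : (2*m+1+1)/2 = m+1 := by omega
    have e0 : (2*m+1)/2 = m := by omega
    have ep : (2*m+1+1) % 2 = 0 := by omega
    unfold Afib
    rw [e2, e1, e0, ep, pow_zero, one_mul]
    exact Bsum_key a c m (2*m+1)

private lemma coeff_eq (n i : ℕ) (h1 : 1 ≤ i) (h2 : 2 * i ≤ n) :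
    n * (n - i).choose i / (n - i) = (n - i).choose i + (n - i - 1).choose (i - 1) := by
  obtain ⟨j, rfl⟩ : ∃ j, i = j + 1 := ⟨i - 1, by omega⟩
  obtain ⟨m, rfl⟩ : ∃ m, n = m + 1 + (j + 1) := ⟨n - j - 2, by omega⟩
  rw [show m + 1 + (j + 1) - (j + 1) = m + 1 by omega, show m + 1 - 1 = m by omega,
    show j + 1 - 1 = j by omega]
  have h : (m + 1 + (j + 1)) * (m + 1).choose (j + 1)
      = ((m + 1).choose (j + 1) + m.choose j) * (m + 1) := by
    calc (m + 1 + (j + 1)) * (m + 1).choose (j + 1)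
        = (m + 1) * (m + 1).choose (j + 1) + (m + 1).choose (j + 1) * (j + 1) := by ring
      _ = (m + 1) * (m + 1).choose (j + 1) + (m + 1) * m.choose j := by
          rw [← Nat.add_one_mul_choose_eq]
      _ = ((m + 1).choose (j + 1) + m.choose j) * (m + 1) := by ring
  rw [h, Nat.mul_div_cancel _ (by omega)]

/-- The right-hand side of the theorem. -/
private def Lsum (a b : R) (n : ℕ) : R :=
  ∑ i ∈ Finset.range (n / 2 + 1),
    ((n * (n - i).choose i / (n - i) : ℕ) : R) * (-a) ^ i * (2 * a - b) ^ (n / 2 - i)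

private lemma Lsum_eq (a b : R) (n : ℕ) (hn : 2 ≤ n) :
    Lsum a b n = Afib a (2*a-b) n - a * Afib a (2*a-b) (n-2) := by
  obtain ⟨k, hk⟩ : ∃ k, n / 2 = k + 1 := ⟨n/2 - 1, by omega⟩
  have hk2 : (n-2)/2 = k := by omega
  have hkn : 2 * k + 2 ≤ n := by omega
  unfold Lsum Afib Bsum
  rw [hk, hk2]
  rw [Finset.sum_range_succ'
        (fun i => ((n * (n - i).choose i / (n - i) : ℕ) : R) * (-a) ^ i * (2*a-b) ^ (k + 1 - i)) (k+1),
      Finset.sum_range_succ'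
        (fun i => ((n - i).choose i : R) * (-a) ^ i * (2*a-b) ^ (k + 1 - i)) (k+1),
      Finset.mul_sum]
  have hconst : ((n * (n - 0).choose 0 / (n - 0) : ℕ) : R) * (-a) ^ 0 * (2*a-b) ^ (k + 1 - 0)
      = ((n - 0).choose 0 : R) * (-a) ^ 0 * (2*a-b) ^ (k + 1 - 0) := by
    have : n * (n - 0).choose 0 / (n - 0) = 1 := by
      simp [Nat.div_self (show 0 < n by omega)]
    rw [this]
    simp
  have hsum : (∑ i ∈ Finset.range (k+1),
        ((n * (n - (i+1)).choose (i+1) / (n - (i+1)) : ℕ) : R) * (-a) ^ (i+1) * (2*a-b) ^ (k + 1 - (i+1)))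
      = ∑ i ∈ Finset.range (k+1),
        (((n - (i+1)).choose (i+1) : R) * (-a) ^ (i+1) * (2*a-b) ^ (k + 1 - (i+1))
          - a * (((n - 2 - i).choose i : R) * (-a) ^ i * (2*a-b) ^ (k - i))) := by
    refine Finset.sum_congr rfl fun i hi => ?_
    have hik : i < k + 1 := Finset.mem_range.1 hi
    rw [coeff_eq n (i+1) (by omega) (by omega),
      show n - (i+1) - 1 = n - 2 - i by omega, show i + 1 - 1 = i by omega,
      show k + 1 - (i+1) = k - i by omega]
    push_cast
    ring
  rw [hconst, hsum, Finset.sum_sub_distrib]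
  ring

private lemma Lsum_rec (a b : R) (m : ℕ) :
    Lsum a b (m+3) = (2*a-b) ^ pdelta (m+2) * Lsum a b (m+2) - a * Lsum a b (m+1) := by
  rcases m with _ | t
  · norm_num [Lsum, pdelta, Finset.sum_range_succ]
    ring
  · have h3 := Lsum_eq a b (t+4) (by omega)
    have h2 := Lsum_eq a b (t+3) (by omega)
    have h1 := Lsum_eq a b (t+2) (by omega)
    rw [show t+4-2 = t+2 by omega] at h3
    rw [show t+3-2 = t+1 by omega] at h2
    rw [show t+2-2 = t by omega] at h1
    rw [show t+1+3 = t+4 by omega, show t+1+2 = t+3 by omega, show t+1+1 = t+2 by omega,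
      h3, h2, h1]
    have A3 := Afib_rec a (2*a-b) (t+2)
    have A1 := Afib_rec a (2*a-b) t
    rw [show (t+2+1) % 2 = (t+1) % 2 by omega] at A3
    rw [show t+2+2 = t+4 by omega, show t+2+1 = t+3 by omega] at A3
    rw [show pdelta (t+3) = (t+1) % 2 by simp only [pdelta]; omega]
    rw [A3, A1]
    ring

private lemma main_aux (a b : R) :
    ∀ m : ℕ, Psi a b (m+1) = Lsum a b (m+1) ∧ Psi a b (m+2) = Lsum a b (m+2)
  | 0 => by
    constructor
    · norm_num [Psi, Lsum]
    · norm_num [Psi, Lsum, pdelta, Finset.sum_range_succ]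
      ring
  | (m+1) => by
    obtain ⟨ih1, ih2⟩ := main_aux a b m
    refine ⟨ih2, ?_⟩
    show Psi a b (m+3) = Lsum a b (m+3)
    rw [show Psi a b (m+3) = (2*a-b)^(pdelta (m+2)) * Psi a b (m+2) - a * Psi a b (m+1) from rfl,
      ih1, ih2, Lsum_rec]

end Aux

theorem stmt2 {R : Type*} [CommRing R] (a b : R) (n : ℕ) (hn : 1 ≤ n) :
    Psi a b n =
      ∑ i ∈ Finset.range (n / 2 + 1),
        ((n * (n - i).choose i / (n - i) : ℕ) : R) * (-a) ^ i *
          (2 * a - b) ^ (n / 2 - i) := by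
  obtain ⟨m, rfl⟩ : ∃ m, n = m + 1 := ⟨n - 1, by omega⟩
  exact (main_aux a b m).1
end

section
/- Let \Psi and \Phi be defined by \Psi(a,b,0)=2, \Psi(a,b,1)=1, \Psi(a,b,n+1)=(2a-b)^{\delta(n)}\Psi(a,b,n)-a\Psi(a,b,n-1) and \Phi(a,b,0)=0, \Phi(a,b,1)=1, \Phi(a,b,n+1)=(2a-b)^{\delta(n+1)}\Phi(a,b,n)-a\Phi(a,b,n-1). Then for all a, b in a commutative ring and all n, \Phi(a,b,2n) = \Phi(a,b,n) \cdot \Psi(a,b,n). -/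
open Finset Polynomial

lemma pdelta_add_two (n : ℕ) : pdelta (n+2) = pdelta n := by
  unfold pdelta; omega

lemma pdelta_odd (n : ℕ) : pdelta (2*n+1) = 1 := by
  unfold pdelta; omega

lemma pdelta_even (n : ℕ) : pdelta (2*n) = 0 := by
  unfold pdelta; omega

lemma phi_rec {R : Type*} [CommRing R] (a b : R) (n : ℕ) :
    Phi a b (n+2) = (2*a-b)^(pdelta n) * Phi a b (n+1) - a * Phi a b n := by
  rw [Phi]
  rw [pdelta_add_two]

lemma psi_rec {R : Type*} [CommRing R] (a b : R) (n : ℕ) :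
    Psi a b (n+2) = (2*a-b)^(pdelta (n+1)) * Psi a b (n+1) - a * Psi a b n := by
  rw [Psi]

lemma pow_sum {R : Type*} [CommRing R] (a b : R) (n : ℕ) :
    (2*a-b)^(pdelta (n+1)) * (2*a-b)^(pdelta n) = 2*a-b := by
  rw [← pow_add, show pdelta (n+1) + pdelta n = 1 by unfold pdelta; omega, pow_one]

lemma lemE {R : Type*} [CommRing R] (a b : R) :
    ∀ n, Phi a b (n+2) * Psi a b n - Phi a b (n+1) * Psi a b (n+1) = a^n := by
  intro n
  induction n with
  | zero => norm_num [Phi, Psi, pdelta]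
  | succ n ih =>
    rw [show n+1+2 = (n+1)+2 by ring, phi_rec a b (n+1), psi_rec a b n]
    linear_combination a * ih

lemma lemF {R : Type*} [CommRing R] (a b : R) :
    ∀ n, (2*a-b)^(pdelta (n+1)) * Phi a b n * Psi a b (n+1)
        - (2*a-b)^(pdelta n) * Phi a b (n+1) * Psi a b n = -2 * a^n := by
  intro n
  induction n with
  | zero => norm_num [Phi, Psi, pdelta]
  | succ n ih =>
    rw [show n+1+1 = n+2 by ring, pdelta_add_two, psi_rec a b n, phi_rec a b n]
    linear_combination a * ih

theorem stmt18 {R : Type*} [CommRing R] (a b : R) (n : ℕ) :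
    Phi a b (2 * n) = Phi a b n * Psi a b n := by
  have key : ∀ n, Phi a b (2*n) = Phi a b n * Psi a b n
      ∧ Phi a b (2*n+2) = Phi a b (n+1) * Psi a b (n+1)
      ∧ Phi a b (2*n+1) = (2*a-b)^(pdelta n) * Phi a b (n+1) * Psi a b n - a^n := by
    intro n
    induction n with
    | zero => norm_num [Phi, Psi, pdelta]
    | succ n ih =>
      obtain ⟨h1, h2, h3⟩ := ih
      have hB : Phi a b (2*n+3)
          = (2*a-b)^(pdelta (n+1)) * Phi a b (n+2) * Psi a b (n+1) - a^(n+1) := by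
        have h4 := phi_rec a b (2*n+1)
        rw [pdelta_odd, pow_one, show 2*n+1+2 = 2*n+3 by ring,
          show 2*n+1+1 = 2*n+2 by ring] at h4
        rw [h4, h2, h3, phi_rec a b n]
        linear_combination a * lemF a b n
          - Phi a b (n+1) * Psi a b (n+1) * pow_sum a b n
      have hA : Phi a b (2*n+4) = Phi a b (n+2) * Psi a b (n+2) := by
        have h4 := phi_rec a b (2*n+2)
        rw [show 2*n+2 = 2*(n+1) by ring, pdelta_even, pow_zero, one_mul] at h4
        rw [show 2*(n+1)+2 = 2*n+4 by ring, show 2*(n+1)+1 = 2*n+3 by ring,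
          show 2*(n+1) = 2*n+2 by ring] at h4
        rw [h4, hB, h2, psi_rec a b n]
        linear_combination a * lemE a b n
      refine ⟨?_, ?_, ?_⟩
      · rw [show 2*(n+1) = 2*n+2 by ring]; exact h2
      · rw [show 2*(n+1)+2 = 2*n+4 by ring]; exact hA
      · rw [show 2*(n+1)+1 = 2*n+3 by ring]; exact hB
  exact (key n).1
end
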